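/- arXiv:2603.10290 — 4 statements merged into one kernel-verified Lean document; each statement's English description precedes it below -/
import Mathlib

section
/- (Round-1 reduction.) Let T=(V,E) be an unweighted tree with deterministic Graph-IRV, let u∈V and A⊆V\{u}. If Kill(T,u,A) holds, then there exists a witness candidate set K with u∈K⊆A∪{u} such that u is eliminated in the very first round of the IRV execution on candidate set K. -/
section IRVCore

variable {V : Type*} [Fintype V] [DecidableEq V] [Nonempty V]

/-- The preference key of voter `x` for candidate `c`: lexicographic in
(distance, candidate id), smaller preferred. -/
def voterKey (d : V → V → ℕ) (idv : V → ℕ) (x c : V) : Lex (ℕ × ℕ) :=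
  toLex (d x c, idv c)

/-- Voter `x`'s top remaining candidate among the candidate set `K`. -/
noncomputable def topChoice (d : V → V → ℕ) (idv : V → ℕ) (x : V) (K : Finset V) : V :=
  if h : K.Nonempty then (Finset.exists_min_image K (voterKey d idv x) h).choose
  else Classical.arbitrary V

/-- Plurality score of candidate `c` within candidate set `K`. -/
noncomputable def plurality (d : V → V → ℕ) (idv : V → ℕ) (K : Finset V) (c : V) : ℕ :=
  (Finset.univ.filter fun x : V => topChoice d idv x K = c).card

/-- Elimination key: minimize plurality score, break ties toward the largest id. -/
noncomputable def elimKey (d : V → V → ℕ) (idv : V → ℕ) (K : Finset V) (c : V) :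
    Lex (ℤ × ℤ) :=
  toLex ((plurality d idv K c : ℤ), -(idv c : ℤ))

/-- The candidate eliminated in the current round. -/
noncomputable def roundLoser (d : V → V → ℕ) (idv : V → ℕ) (K : Finset V) : V :=
  if h : K.Nonempty then (Finset.exists_min_image K (elimKey d idv K) h).choose
  else Classical.arbitrary V

lemma roundLoser_mem (d : V → V → ℕ) (idv : V → ℕ) {K : Finset V} (h : K.Nonempty) :
    roundLoser d idv K ∈ K := by
  unfold roundLoser
  rw [dif_pos h]
  exact (Finset.exists_min_image K (elimKey d idv K) h).choose_spec.1

/-- The IRV winner on candidate set `K`. -/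
noncomputable def irvWinner (d : V → V → ℕ) (idv : V → ℕ) (K : Finset V) : V :=
  if h : 2 ≤ K.card then irvWinner d idv (K.erase (roundLoser d idv K))
  else if h2 : K.Nonempty then h2.choose else Classical.arbitrary V
termination_by K.card
decreasing_by
  exact Finset.card_erase_lt_of_mem (roundLoser_mem d idv (Finset.card_pos.mp (by omega)))

/-- `Kill d idv u A`: some candidate set `K` with `u ∈ K ⊆ A ∪ {u}` makes `u` lose. -/
def Kill (d : V → V → ℕ) (idv : V → ℕ) (u : V) (A : Set V) : Prop :=
  ∃ K : Finset V, u ∈ K ∧ ↑K ⊆ insert u A ∧ irvWinner d idv K ≠ u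

/-- `S` is an IRV exclusion zone. -/
def ExclusionZone (d : V → V → ℕ) (idv : V → ℕ) (S : Set V) : Prop :=
  ∀ K : Finset V, K.Nonempty → (∃ c ∈ K, c ∈ S) → irvWinner d idv K ∈ S

lemma irvWinner_mem (d : V → V → ℕ) (idv : V → ℕ) {K : Finset V} (h : K.Nonempty) :
    irvWinner d idv K ∈ K := by
  rw [irvWinner]
  by_cases h2 : 2 ≤ K.card
  · rw [dif_pos h2]
    have hl := roundLoser_mem d idv h
    have herase : (K.erase (roundLoser d idv K)).Nonempty := by
      rw [← Finset.card_pos, Finset.card_erase_of_mem hl]; omega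
    exact Finset.mem_of_mem_erase (irvWinner_mem d idv herase)
  · rw [dif_neg h2, dif_pos h]
    exact h.choose_spec
termination_by K.card
decreasing_by
  exact Finset.card_erase_lt_of_mem (roundLoser_mem d idv h)

lemma round1_key (d : V → V → ℕ) (idv : V → ℕ) (u : V) (K : Finset V)
    (hu : u ∈ K) (hw : irvWinner d idv K ≠ u) :
    ∃ K' : Finset V, K' ⊆ K ∧ u ∈ K' ∧ irvWinner d idv K' ≠ u ∧
      roundLoser d idv K' = u := by
  by_cases h2 : 2 ≤ K.card
  · by_cases hl : roundLoser d idv K = u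
    · exact ⟨K, Finset.Subset.refl K, hu, hw, hl⟩
    · have hlm := roundLoser_mem d idv ⟨u, hu⟩
      have hu' : u ∈ K.erase (roundLoser d idv K) :=
        Finset.mem_erase.mpr ⟨fun h => hl h.symm, hu⟩
      have hw' : irvWinner d idv (K.erase (roundLoser d idv K)) ≠ u := by
        rw [irvWinner, dif_pos h2] at hw; exact hw
      obtain ⟨K', hsub, rest⟩ := round1_key d idv u (K.erase (roundLoser d idv K)) hu' hw'
      exact ⟨K', hsub.trans (Finset.erase_subset _ _), rest⟩
  · exfalso
    have hK : K = {u} := by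
      apply Finset.eq_singleton_iff_unique_mem.mpr
      refine ⟨hu, fun x hx => ?_⟩
      by_contra hne
      have : 2 ≤ K.card := Finset.one_lt_card.mpr ⟨x, hx, u, hu, hne⟩
      omega
    subst hK
    apply hw
    have := irvWinner_mem d idv (Finset.singleton_nonempty u)
    simpa using this
termination_by K.card
decreasing_by
  exact Finset.card_erase_lt_of_mem hlm

end IRVCore

/-- **Round-1 reduction.** If `Kill(T,u,A)` holds on a tree `T`, then there is a witness
candidate set `K` with `u ∈ K ⊆ A ∪ {u}` on which `u` loses, and moreover `u` is eliminated
already in the very first round of the IRV execution on `K`. -/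
theorem round1_reduction {V : Type*} [Fintype V] [DecidableEq V] [Nonempty V]
    (G : SimpleGraph V) (hG : G.IsTree)
    (idv : V → ℕ) (hid : Function.Injective idv)
    (u : V) (A : Set V) (hA : u ∉ A)
    (hkill : Kill G.dist idv u A) :
    ∃ K : Finset V, u ∈ K ∧ ↑K ⊆ insert u A ∧ irvWinner G.dist idv K ≠ u ∧
      roundLoser G.dist idv K = u := by
  obtain ⟨K, hu, hsub, hw⟩ := hkill
  obtain ⟨K', hsub', hu', hw', hl'⟩ := round1_key G.dist idv u K hu hw
  exact ⟨K', hu', (Finset.coe_subset.mpr hsub').trans hsub, hw', hl'⟩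
end

section
/- (Descendant-deletion step.) Let T=(V,E) be an unweighted tree with deterministic Graph-IRV, let u∈V, and root T at u. Let K={u}∪F be a candidate set with F⊆V\{u}, and suppose u is eliminated in round 1 of the IRV execution on K. If a,b∈F are distinct with a a proper ancestor of b in T rooted at u, then u is also eliminated in round 1 of the IRV execution on the candidate set K\{b}. In particular, every voter whose round-1 top choice under K is b lies in the subtree T_a rooted at a, and u's round-1 plurality score does not increase when b is deleted. -/
/-- In a tree with distance function `d`, rooted at `u`: vertex `a` is an ancestor of `b`
(i.e. `a` lies on the unique path from the root `u` to `b`); membership of `x` in the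
subtree `T_a` rooted at `a` is exactly `IsAncestor d u a x`. -/
def IsAncestor {V : Type*} (d : V → V → ℕ) (u a b : V) : Prop :=
  d u a + d a b = d u b

section IRV

variable {V : Type*} [Nonempty V] {d : V → V → ℕ} {idv : V → ℕ} {K : Finset V}

lemma topChoice_mem_and_le (x : V) (h : K.Nonempty) :
    topChoice d idv x K ∈ K ∧
      ∀ c ∈ K, voterKey d idv x (topChoice d idv x K) ≤ voterKey d idv x c := by
  unfold topChoice
  rw [dif_pos h]
  exact (Finset.exists_min_image K (voterKey d idv x) h).choose_spec

lemma dist_topChoice_le (x : V) {c : V} (hc : c ∈ K) : d x (topChoice d idv x K) ≤ d x c := by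
  have hle := (topChoice_mem_and_le (d := d) (idv := idv) x ⟨c, hc⟩).2 c hc
  rcases Prod.Lex.le_iff.mp hle with h | h
  · exact h.le
  · exact h.1.le

lemma topChoice_ne_of_dist_lt {x c c' : V} (hc : c ∈ K) (hlt : d x c < d x c') :
    topChoice d idv x K ≠ c' := by
  rintro rfl
  exact (dist_topChoice_le x hc).not_gt hlt

lemma topChoice_eq_of_forall_le (hid : Function.Injective idv) {x c : V} (hc : c ∈ K)
    (hmin : ∀ c' ∈ K, voterKey d idv x c ≤ voterKey d idv x c') :
    topChoice d idv x K = c := by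
  obtain ⟨htop, htop_le⟩ := topChoice_mem_and_le (d := d) (idv := idv) x ⟨c, hc⟩
  have hkey := le_antisymm (htop_le c hc) (hmin _ htop)
  exact hid (congrArg (fun p : Lex (ℕ × ℕ) => (ofLex p).2) hkey)

variable [DecidableEq V]

lemma topChoice_erase_of_ne (hid : Function.Injective idv) {x b : V}
    (hx : topChoice d idv x K ≠ b) : topChoice d idv x (K.erase b) = topChoice d idv x K := by
  by_cases hK : K.Nonempty
  · obtain ⟨htop, htop_le⟩ := topChoice_mem_and_le (d := d) (idv := idv) x hK
    exact topChoice_eq_of_forall_le hid (Finset.mem_erase.mpr ⟨hx, htop⟩)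
      fun c hc => htop_le c (Finset.mem_of_mem_erase hc)
  · rw [Finset.not_nonempty_iff_eq_empty] at hK
    simp only [hK, Finset.erase_empty]

variable [Fintype V]

lemma plurality_le_plurality_erase (hid : Function.Injective idv) {b c : V} (hcb : c ≠ b) :
    plurality d idv K c ≤ plurality d idv (K.erase b) c := by
  refine Finset.card_le_card fun x hx => ?_
  simp only [Finset.mem_filter, Finset.mem_univ, true_and] at hx ⊢
  rw [topChoice_erase_of_ne hid (hx ▸ hcb), hx]

lemma plurality_erase_le (hid : Function.Injective idv) {b u : V}
    (hb : ∀ x, topChoice d idv x K = b → topChoice d idv x (K.erase b) ≠ u) :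
    plurality d idv (K.erase b) u ≤ plurality d idv K u := by
  refine Finset.card_le_card fun x hx => ?_
  simp only [Finset.mem_filter, Finset.mem_univ, true_and] at hx ⊢
  by_cases hxb : topChoice d idv x K = b
  · exact absurd hx (hb x hxb)
  · rwa [← topChoice_erase_of_ne hid hxb]

lemma elimKey_roundLoser_le {c : V} (hc : c ∈ K) :
    elimKey d idv K (roundLoser d idv K) ≤ elimKey d idv K c := by
  have hK : K.Nonempty := ⟨c, hc⟩
  unfold roundLoser
  rw [dif_pos hK]
  exact (Finset.exists_min_image K (elimKey d idv K) hK).choose_spec.2 c hc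

lemma roundLoser_eq_of_forall_le (hid : Function.Injective idv) {u : V} (hu : u ∈ K)
    (hmin : ∀ c ∈ K, elimKey d idv K u ≤ elimKey d idv K c) : roundLoser d idv K = u := by
  have hkey := le_antisymm (elimKey_roundLoser_le hu) (hmin _ (roundLoser_mem d idv ⟨u, hu⟩))
  have hid_eq := congrArg (fun p : Lex (ℤ × ℤ) => (ofLex p).2) hkey
  simp only [elimKey, ofLex_toLex, neg_inj, Nat.cast_inj] at hid_eq
  exact hid hid_eq

lemma roundLoser_eq_of_subset (hid : Function.Injective idv) {K' : Finset V} {u : V}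
    (hK' : K' ⊆ K) (hu : u ∈ K') (hloser : roundLoser d idv K = u)
    (hu_score : plurality d idv K' u ≤ plurality d idv K u)
    (hc_score : ∀ c ∈ K', plurality d idv K c ≤ plurality d idv K' c) :
    roundLoser d idv K' = u := by
  refine roundLoser_eq_of_forall_le hid hu fun c hc => ?_
  have hold : elimKey d idv K u ≤ elimKey d idv K c := hloser ▸ elimKey_roundLoser_le (hK' hc)
  have := hc_score c hc
  simp only [elimKey, Prod.Lex.le_iff, ofLex_toLex] at hold ⊢
  omega

end IRV

namespace SimpleGraph

variable {V : Type*} {G : SimpleGraph V}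

lemma Walk.dist_add_dist_of_mem_support [DecidableEq V] {u v a : V} (p : G.Walk u v)
    (hp : p.length = G.dist u v) (ha : a ∈ p.support) :
    G.dist u a + G.dist a v = G.dist u v := by
  have htake : G.dist u a ≤ (p.takeUntil a ha).length := dist_le _
  have hdrop : G.dist a v ≤ (p.dropUntil a ha).length := dist_le _
  have hsplit : (p.takeUntil a ha).length + (p.dropUntil a ha).length = p.length := by
    rw [← Walk.length_append, p.take_spec ha]
  have := (p.takeUntil a ha).reachable.dist_triangle_left v
  omega

lemma IsTree.mem_support_of_dist_add_dist [DecidableEq V] (hG : G.IsTree) {u a b : V}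
    (hab : G.dist u a + G.dist a b = G.dist u b) (w : G.Walk u b) : a ∈ w.support := by
  obtain ⟨p, -, hp⟩ := hG.connected.exists_path_of_dist u a
  obtain ⟨q, -, hq⟩ := hG.connected.exists_path_of_dist a b
  have hpq : (p.append q).IsPath :=
    (p.append q).isPath_of_length_eq_dist (by rw [Walk.length_append, hp, hq, hab])
  have hbypass : w.bypass = p.append q :=
    (hG.existsUnique_path u b).unique w.bypass_isPath hpq
  apply w.support_bypass_subset_support
  rw [hbypass, Walk.mem_support_append_iff]
  exact Or.inl p.end_mem_support

/-- The walk `u → x → b` passes through `a`; if it did so on the leg `x → b`, then `x`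
would be strictly closer to `a` than to `b`. -/
lemma IsTree.isAncestor_of_dist_le (hG : G.IsTree) {u a b x : V}
    (hanc : IsAncestor G.dist u a b) (hab : a ≠ b) (hx : G.dist x b ≤ G.dist x a) :
    IsAncestor G.dist u a x := by
  classical
  obtain ⟨r, hr⟩ := hG.connected.exists_walk_length_eq_dist u x
  obtain ⟨s, hs⟩ := hG.connected.exists_walk_length_eq_dist x b
  have hpos := hG.connected.pos_dist_of_ne hab
  have ha_mem := hG.mem_support_of_dist_add_dist hanc (r.append s)
  rcases (Walk.mem_support_append_iff r s).mp ha_mem with hr_a | hs_a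
  · exact r.dist_add_dist_of_mem_support hr hr_a
  · have := s.dist_add_dist_of_mem_support hs hs_a
    omega

lemma Connected.dist_lt_dist_of_isAncestor (hG : G.Connected) {u a x : V} (hua : u ≠ a)
    (hanc : IsAncestor G.dist u a x) : G.dist x a < G.dist x u := by
  have hpos := hG.pos_dist_of_ne hua
  rw [dist_comm (u := x), dist_comm (u := x)]
  unfold IsAncestor at hanc
  omega

end SimpleGraph

/-- **Descendant-deletion step.** Suppose `u` is eliminated in round 1 on `K = {u} ∪ F`
and `a, b ∈ F` are distinct with `a` a proper ancestor of `b` in the tree rooted at `u`.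
Then `u` is still eliminated in round 1 on `K \ {b}`; moreover every voter whose round-1
top choice under `K` is `b` lies in the subtree rooted at `a`, and `u`'s round-1 plurality
score does not increase when `b` is deleted. -/
theorem descendant_deletion {V : Type*} [Fintype V] [DecidableEq V] [Nonempty V]
    (G : SimpleGraph V) (hG : G.IsTree)
    (idv : V → ℕ) (hid : Function.Injective idv)
    (u : V) (F : Finset V) (huF : u ∉ F)
    (hround1 : roundLoser G.dist idv (insert u F) = u)
    (a b : V) (ha : a ∈ F) (hb : b ∈ F) (hab : a ≠ b)
    (hanc : IsAncestor G.dist u a b) :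
    roundLoser G.dist idv ((insert u F).erase b) = u ∧
    (∀ x : V, topChoice G.dist idv x (insert u F) = b → IsAncestor G.dist u a x) ∧
    plurality G.dist idv ((insert u F).erase b) u ≤ plurality G.dist idv (insert u F) u := by
  have hua : u ≠ a := fun h => huF (h ▸ ha)
  have hub : u ≠ b := fun h => huF (h ▸ hb)
  have ha_erase : a ∈ (insert u F).erase b :=
    Finset.mem_erase.mpr ⟨hab, Finset.mem_insert_of_mem ha⟩
  have hu_erase : u ∈ (insert u F).erase b :=
    Finset.mem_erase.mpr ⟨hub, Finset.mem_insert_self u F⟩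
  have hsubtree : ∀ x, topChoice G.dist idv x (insert u F) = b → IsAncestor G.dist u a x :=
    fun x hx => hG.isAncestor_of_dist_le hanc hab
      (hx ▸ dist_topChoice_le x (Finset.mem_insert_of_mem ha))
  have hu_score : plurality G.dist idv ((insert u F).erase b) u ≤
      plurality G.dist idv (insert u F) u :=
    plurality_erase_le hid fun x hx => topChoice_ne_of_dist_lt ha_erase
      (hG.connected.dist_lt_dist_of_isAncestor hua (hsubtree x hx))
  refine ⟨roundLoser_eq_of_subset hid (Finset.erase_subset b _) hu_erase hround1 hu_score
    fun c hc => plurality_le_plurality_erase hid (Finset.ne_of_mem_erase hc), hsubtree, hu_score⟩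
end

section
/- (IRV distortion lower bound 9/5 on a path.) Consider the path graph with vertices 1,…,9, one voter per vertex, and three candidates located at vertices 1, 5 and 9, where the candidate at vertex 5 carries the largest ID of the three (so that voters' distance ties are broken against it and IRV's last-place elimination ties are broken against it). Then in round 1 each candidate receives exactly 3 first-place votes (vertices {1,2,3} for candidate 1, {4,5,6} for candidate 5, {7,8,9} for candidate 9), the candidate at vertex 5 is eliminated first, and the IRV winner is the candidate at vertex 1 or at vertex 9, with social cost 36, whereas the optimal candidate at vertex 5 has social cost 20. Hence the distortion of IRV on this instance is 9/5. -/
/-- Shortest-path distance on the path graph with vertices `1, …, 9`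
(indexed by `Fin 9`). -/
def pathDist (i j : Fin 9) : ℕ := ((i : ℤ) - (j : ℤ)).natAbs

section IRVHelpers

variable {V : Type*} [Fintype V] [DecidableEq V] [Nonempty V]

lemma topChoice_eq' (d : V → V → ℕ) (idv : V → ℕ) (x c : V) {K : Finset V} (hc : c ∈ K)
    (hmin : ∀ c' ∈ K, c' ≠ c → voterKey d idv x c < voterKey d idv x c') :
    topChoice d idv x K = c := by
  unfold topChoice
  rw [dif_pos ⟨c, hc⟩]
  have spec := (Finset.exists_min_image K (voterKey d idv x) ⟨c, hc⟩).choose_spec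
  by_contra h
  exact absurd (spec.2 c hc) (not_le.mpr (hmin _ spec.1 h))

lemma roundLoser_eq' (d : V → V → ℕ) (idv : V → ℕ) (c : V) {K : Finset V} (hc : c ∈ K)
    (hmin : ∀ c' ∈ K, c' ≠ c → elimKey d idv K c < elimKey d idv K c') :
    roundLoser d idv K = c := by
  unfold roundLoser
  rw [dif_pos ⟨c, hc⟩]
  have spec := (Finset.exists_min_image K (elimKey d idv K) ⟨c, hc⟩).choose_spec
  by_contra h
  exact absurd (spec.2 c hc) (not_le.mpr (hmin _ spec.1 h))

lemma irvWinner_singleton' (d : V → V → ℕ) (idv : V → ℕ) (c : V) :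
    irvWinner d idv {c} = c := by
  rw [irvWinner]
  rw [dif_neg (by simp : ¬ 2 ≤ ({c} : Finset V).card)]
  have h2 : ({c} : Finset V).Nonempty := ⟨c, by simp⟩
  rw [dif_pos h2]
  simpa using h2.choose_spec

lemma irvWinner_step' (d : V → V → ℕ) (idv : V → ℕ) {K : Finset V} (h : 2 ≤ K.card) :
    irvWinner d idv K = irvWinner d idv (K.erase (roundLoser d idv K)) := by
  rw [irvWinner, dif_pos h]

end IRVHelpers


lemma tcK (idv : Fin 9 → ℕ) (h04 : idv 0 < idv 4) (h84 : idv 8 < idv 4) (x : Fin 9) :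
    topChoice pathDist idv x ({0, 4, 8} : Finset (Fin 9)) =
      if (x:ℕ) ≤ 2 then 0 else if (x:ℕ) ≤ 5 then 4 else 8 := by
  fin_cases x <;>
  · norm_num
    apply topChoice_eq'
    · decide
    · intro c' hc' hne
      fin_cases hc' <;>
        simp_all [voterKey, pathDist, Prod.Lex.lt_iff] <;> omega

lemma tcA (idv : Fin 9 → ℕ) (h08 : idv 0 < idv 8) (x : Fin 9) :
    topChoice pathDist idv x ({0, 8} : Finset (Fin 9)) =
      if (x:ℕ) ≤ 4 then 0 else 8 := by
  fin_cases x <;>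
  · norm_num
    apply topChoice_eq'
    · decide
    · intro c' hc' hne
      fin_cases hc' <;>
        simp_all [voterKey, pathDist, Prod.Lex.lt_iff] <;> omega

lemma tcB (idv : Fin 9 → ℕ) (h80 : idv 8 < idv 0) (x : Fin 9) :
    topChoice pathDist idv x ({0, 8} : Finset (Fin 9)) =
      if (x:ℕ) ≤ 3 then 0 else 8 := by
  fin_cases x <;>
  · norm_num
    apply topChoice_eq'
    · decide
    · intro c' hc' hne
      fin_cases hc' <;>
        simp_all [voterKey, pathDist, Prod.Lex.lt_iff] <;> omega


/-- **IRV distortion lower bound 9/5 on a path.**  On the path `1–⋯–9` with one voter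
per vertex and candidates at vertices `1, 5, 9` (indices `0, 4, 8`), where the middle
candidate carries the largest ID of the three (so all ties are broken against it): each
candidate gets exactly `3` first-place votes, the middle candidate is eliminated first,
the IRV winner is the candidate at vertex `1` or at vertex `9` with social cost `36`,
the optimal candidate (vertex `5`) has social cost `20`, and the distortion is `9/5`. -/
theorem irv_path_nine_distortion
    (idv : Fin 9 → ℕ) (hinj : Function.Injective idv)
    (h04 : idv 0 < idv 4) (h84 : idv 8 < idv 4) :
    plurality pathDist idv ({0, 4, 8} : Finset (Fin 9)) 0 = 3 ∧
    plurality pathDist idv ({0, 4, 8} : Finset (Fin 9)) 4 = 3 ∧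
    plurality pathDist idv ({0, 4, 8} : Finset (Fin 9)) 8 = 3 ∧
    roundLoser pathDist idv ({0, 4, 8} : Finset (Fin 9)) = 4 ∧
    (irvWinner pathDist idv ({0, 4, 8} : Finset (Fin 9)) = 0 ∨
      irvWinner pathDist idv ({0, 4, 8} : Finset (Fin 9)) = 8) ∧
    (∑ i : Fin 9, pathDist i 0) = 36 ∧
    (∑ i : Fin 9, pathDist i 8) = 36 ∧
    (∑ i : Fin 9, pathDist i 4) = 20 ∧
    5 * (∑ i : Fin 9, pathDist i (irvWinner pathDist idv ({0, 4, 8} : Finset (Fin 9)))) =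
      9 * (∑ i : Fin 9, pathDist i 4) := by

  set K : Finset (Fin 9) := {0, 4, 8} with hK
  have tc := tcK idv h04 h84
  have f0 : (Finset.univ.filter fun x : Fin 9 => topChoice pathDist idv x K = 0)
      = {0, 1, 2} := by
    ext x; rw [Finset.mem_filter, tc x]; fin_cases x <;> simp
  have f4 : (Finset.univ.filter fun x : Fin 9 => topChoice pathDist idv x K = 4)
      = {3, 4, 5} := by
    ext x; rw [Finset.mem_filter, tc x]; fin_cases x <;> simp
  have f8 : (Finset.univ.filter fun x : Fin 9 => topChoice pathDist idv x K = 8)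
      = {6, 7, 8} := by
    ext x; rw [Finset.mem_filter, tc x]; fin_cases x <;> simp
  have p0 : plurality pathDist idv K 0 = 3 := by rw [plurality, f0]; decide
  have p4 : plurality pathDist idv K 4 = 3 := by rw [plurality, f4]; decide
  have p8 : plurality pathDist idv K 8 = 3 := by rw [plurality, f8]; decide
  have e0 : elimKey pathDist idv K 0 = toLex ((3:ℤ), -(idv 0:ℤ)) := by rw [elimKey, p0]; norm_num
  have e4 : elimKey pathDist idv K 4 = toLex ((3:ℤ), -(idv 4:ℤ)) := by rw [elimKey, p4]; norm_num
  have e8 : elimKey pathDist idv K 8 = toLex ((3:ℤ), -(idv 8:ℤ)) := by rw [elimKey, p8]; norm_num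
  have rl : roundLoser pathDist idv K = 4 := by
    apply roundLoser_eq'
    · decide
    · intro c' hc' hne
      fin_cases hc'
      · rw [e4, e0]; simp [Prod.Lex.lt_iff]; omega
      · exact absurd rfl hne
      · rw [e4, e8]; simp [Prod.Lex.lt_iff]; omega
  have hK2 : K.erase (roundLoser pathDist idv K) = ({0, 8} : Finset (Fin 9)) := by
    rw [rl]; decide
  have hstep : irvWinner pathDist idv K = irvWinner pathDist idv ({0, 8} : Finset (Fin 9)) := by
    rw [irvWinner_step' pathDist idv (by decide : 2 ≤ K.card), hK2]
  set K2 : Finset (Fin 9) := {0, 8} with hK2d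
  have hne08 : idv 0 ≠ idv 8 := fun h => by
    have := hinj h; exact absurd this (by decide)
  have hwin : irvWinner pathDist idv K2 = 0 ∨ irvWinner pathDist idv K2 = 8 := by
    rcases hne08.lt_or_gt with h08 | h80
    · left
      have tc2 := tcA idv h08
      have g0 : (Finset.univ.filter fun x : Fin 9 => topChoice pathDist idv x K2 = 0)
          = {0, 1, 2, 3, 4} := by
        ext x; rw [Finset.mem_filter, tc2 x]; fin_cases x <;> simp
      have g8 : (Finset.univ.filter fun x : Fin 9 => topChoice pathDist idv x K2 = 8)
          = {5, 6, 7, 8} := by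
        ext x; rw [Finset.mem_filter, tc2 x]; fin_cases x <;> simp
      have q0 : plurality pathDist idv K2 0 = 5 := by rw [plurality, g0]; decide
      have q8 : plurality pathDist idv K2 8 = 4 := by rw [plurality, g8]; decide
      have e0 : elimKey pathDist idv K2 0 = toLex ((5:ℤ), -(idv 0:ℤ)) := by
        rw [elimKey, q0]; norm_num
      have e8 : elimKey pathDist idv K2 8 = toLex ((4:ℤ), -(idv 8:ℤ)) := by
        rw [elimKey, q8]; norm_num
      have rl2 : roundLoser pathDist idv K2 = 8 := by
        apply roundLoser_eq'
        · decide
        · intro c' hc' hne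
          fin_cases hc'
          · rw [e8, e0]; simp [Prod.Lex.lt_iff]
          · exact absurd rfl hne
      have : K2.erase (roundLoser pathDist idv K2) = ({0} : Finset (Fin 9)) := by
        rw [rl2]; decide
      rw [irvWinner_step' pathDist idv (by decide : 2 ≤ K2.card), this,
        irvWinner_singleton']
    · right
      have tc2 := tcB idv h80
      have g0 : (Finset.univ.filter fun x : Fin 9 => topChoice pathDist idv x K2 = 0)
          = {0, 1, 2, 3} := by
        ext x; rw [Finset.mem_filter, tc2 x]; fin_cases x <;> simp
      have g8 : (Finset.univ.filter fun x : Fin 9 => topChoice pathDist idv x K2 = 8)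
          = {4, 5, 6, 7, 8} := by
        ext x; rw [Finset.mem_filter, tc2 x]; fin_cases x <;> simp
      have q0 : plurality pathDist idv K2 0 = 4 := by rw [plurality, g0]; decide
      have q8 : plurality pathDist idv K2 8 = 5 := by rw [plurality, g8]; decide
      have e0 : elimKey pathDist idv K2 0 = toLex ((4:ℤ), -(idv 0:ℤ)) := by
        rw [elimKey, q0]; norm_num
      have e8 : elimKey pathDist idv K2 8 = toLex ((5:ℤ), -(idv 8:ℤ)) := by
        rw [elimKey, q8]; norm_num
      have rl2 : roundLoser pathDist idv K2 = 0 := by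
        apply roundLoser_eq'
        · decide
        · intro c' hc' hne
          fin_cases hc'
          · exact absurd rfl hne
          · rw [e0, e8]; simp [Prod.Lex.lt_iff]
      have : K2.erase (roundLoser pathDist idv K2) = ({8} : Finset (Fin 9)) := by
        rw [rl2]; decide
      rw [irvWinner_step' pathDist idv (by decide : 2 ≤ K2.card), this,
        irvWinner_singleton']
  have s0 : (∑ i : Fin 9, pathDist i 0) = 36 := by decide
  have s8 : (∑ i : Fin 9, pathDist i 8) = 36 := by decide
  have s4 : (∑ i : Fin 9, pathDist i 4) = 20 := by decide
  refine ⟨p0, p4, p8, rl, hstep ▸ hwin, s0, s8, s4, ?_⟩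
  rw [hstep]
  rcases hwin with h | h <;> rw [h] <;> simp [s0, s8, s4]
end

section
/- (Distortion upper bound 3 on perfect binary trees.) Let T be the perfect binary tree of height h≥1, and for a vertex v let S(v)=∑_{u∈V} d(u,v). Then for every leaf ℓ of T, S(ℓ) ≤ 3·S(root). Combined with the fact that the root minimizes S and leaves maximize S over all vertices, this implies that the distortion of any voting rule (and thus of IRV) on unweighted perfect binary trees, with voters at all vertices and candidates at a subset of vertices, is at most 3. -/
/-!
Moving a candidate from a non-root vertex `v` to its parent changes every voter's distance by
exactly one: it shrinks for the voters in the subtree of `v` and grows for all the others.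
In the perfect tree the subtree of a non-root vertex holds fewer than half of the vertices, so
`S` decreases towards the root and the root minimizes `S`; and in any case
`S(v) ≤ S(root) + n · depth v ≤ S(root) + n · h` with `n = 2^(h+1) - 1`. Finally
`n · h ≤ 2 · h · 2^h ≤ 2 · S(root)`, since the `2^h` leaves alone contribute `h · 2^h`
to `S(root)`.
-/

/-- Tree distance between two vertices of the infinite binary tree, where vertices are
identified with their 1-based heap indices (the root is `1`, the children of `j` are
`2j` and `2j+1`): repeatedly climb from the larger index to its parent. -/
def td (a b : ℕ) : ℕ :=
  if a = b then 0
  else if b < a then td (a / 2) b + 1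
  else td a (b / 2) + 1
termination_by a + b
decreasing_by
  · omega
  · omega

/-- The vertices of the perfect binary tree of height `h` are the heap indices
`1, …, 2^(h+1) − 1`, encoded as `Fin (2^(h+1) − 1)` (index `i` is vertex `i + 1`);
`i` is a leaf iff `2^h ≤ i + 1`.  `pbtSC h v` is the sum of tree distances from all
vertices to `v`. -/
def pbtSC (h : ℕ) (v : Fin (2 ^ (h + 1) - 1)) : ℕ :=
  ∑ u : Fin (2 ^ (h + 1) - 1), td ((u : ℕ) + 1) ((v : ℕ) + 1)

/-- The root of the perfect binary tree of height `h` (heap index `1`). -/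
def pbtRoot (h : ℕ) : Fin (2 ^ (h + 1) - 1) :=
  ⟨0, by
    have h2 : (2 : ℕ) ^ 1 ≤ 2 ^ (h + 1) := Nat.pow_le_pow_right (by norm_num) (by omega)
    norm_num at h2
    omega⟩

open Finset

lemma td_self (a : ℕ) : td a a = 0 := by
  rw [td]; simp

lemma td_of_gt {a b : ℕ} (h : b < a) : td a b = td (a / 2) b + 1 := by
  rw [td, if_neg (by omega), if_pos h]

lemma td_of_lt {a b : ℕ} (h : a < b) : td a b = td a (b / 2) + 1 := by
  rw [td, if_neg (by omega), if_neg (by omega)]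

lemma td_one_right {u : ℕ} (hu : 1 ≤ u) : td u 1 = Nat.log 2 u := by
  induction u using Nat.strong_induction_on with
  | _ u ih =>
    rcases hu.eq_or_lt with rfl | hu
    · simp [td_self]
    · rw [td_of_gt hu, ih (u / 2) (by omega) (by omega), Nat.log_div_base]
      have : 1 ≤ Nat.log 2 u := Nat.le_log_of_pow_le (by norm_num) (by omega)
      omega

def IsHeapAncestor (v u : ℕ) : Prop := ∃ k, u / 2 ^ k = v

lemma td_div_two_right_of_isHeapAncestor {u v : ℕ} (hv : 2 ≤ v) (huv : IsHeapAncestor v u) :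
    td u (v / 2) = td u v + 1 := by
  obtain ⟨k, hk⟩ := huv
  induction k generalizing u with
  | zero =>
    subst hk
    rw [pow_zero, Nat.div_one, td_self, td_of_gt (by omega), td_self]
  | succ k ih =>
    have hk' : u / 2 / 2 ^ k = v := by rw [Nat.div_div_eq_div_mul, ← pow_succ']; exact hk
    have : v ≤ u / 2 := hk' ▸ Nat.div_le_self _ _
    rw [td_of_gt (by omega : v < u), td_of_gt (by omega : v / 2 < u), ih hk']

lemma td_div_two_right_of_not_isHeapAncestor {u v : ℕ} (hu : 1 ≤ u) (hv : 2 ≤ v)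
    (huv : ¬ IsHeapAncestor v u) : td u v = td u (v / 2) + 1 := by
  induction u using Nat.strong_induction_on with
  | _ u ih =>
    have hne : u ≠ v := by rintro rfl; exact huv ⟨0, by simp⟩
    rcases hne.lt_or_gt with hlt | hgt
    · exact td_of_lt hlt
    · have hparent : ¬ IsHeapAncestor v (u / 2) := by
        rintro ⟨k, hk⟩
        exact huv ⟨k + 1, by rw [pow_succ', ← Nat.div_div_eq_div_mul, hk]⟩
      rw [td_of_gt hgt, td_of_gt (by omega : v / 2 < u),
        ih (u / 2) (by omega) (by omega) hparent]

def heapSC (N v : ℕ) : ℕ := ∑ u ∈ Icc 1 N, td u v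

lemma pbtSC_eq_heapSC (h : ℕ) (v : Fin (2 ^ (h + 1) - 1)) :
    pbtSC h v = heapSC (2 ^ (h + 1) - 1) ((v : ℕ) + 1) := by
  rw [pbtSC, heapSC, Fin.sum_univ_eq_sum_range (fun u => td (u + 1) ((v : ℕ) + 1)),
    range_eq_Ico, sum_Ico_add' (fun u => td u ((v : ℕ) + 1)), Ico_add_one_right_eq_Icc, zero_add]

lemma pbtSC_root (h : ℕ) : pbtSC h (pbtRoot h) = heapSC (2 ^ (h + 1) - 1) 1 :=
  pbtSC_eq_heapSC h (pbtRoot h)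

lemma heapSC_le_heapSC_div_two_add {N v : ℕ} (hv : 2 ≤ v) :
    heapSC N v ≤ heapSC N (v / 2) + N := by
  have hstep : ∀ u ∈ Icc 1 N, td u v ≤ td u (v / 2) + 1 := by
    intro u hu
    by_cases huv : IsHeapAncestor v u
    · rw [td_div_two_right_of_isHeapAncestor hv huv]; omega
    · rw [td_div_two_right_of_not_isHeapAncestor (mem_Icc.1 hu).1 hv huv]
  calc heapSC N v ≤ ∑ u ∈ Icc 1 N, (td u (v / 2) + 1) := sum_le_sum hstep
    _ = heapSC N (v / 2) + N := by simp [heapSC, sum_add_distrib]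

lemma heapSC_le_heapSC_one_add {N v : ℕ} (hv : 1 ≤ v) :
    heapSC N v ≤ heapSC N 1 + N * Nat.log 2 v := by
  induction v using Nat.strong_induction_on with
  | _ v ih =>
    rcases hv.eq_or_lt with rfl | hv
    · simp
    · have hlog : Nat.log 2 (v / 2) + 1 = Nat.log 2 v := by
        rw [Nat.log_div_base]
        have : 1 ≤ Nat.log 2 v := Nat.le_log_of_pow_le (by norm_num) (by omega)
        omega
      calc heapSC N v ≤ heapSC N (v / 2) + N := heapSC_le_heapSC_div_two_add hv
        _ ≤ heapSC N 1 + N * Nat.log 2 (v / 2) + N := by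
          gcongr; exact ih (v / 2) (by omega) (by omega)
        _ = heapSC N 1 + N * Nat.log 2 v := by rw [← hlog]; ring

open Classical in
lemma heapSC_div_two_add_card {N v : ℕ} (hv : 2 ≤ v) :
    heapSC N (v / 2) + N = heapSC N v + 2 * #{u ∈ Icc 1 N | IsHeapAncestor v u} := by
  have hin : ∑ u ∈ Icc 1 N with IsHeapAncestor v u, td u (v / 2) =
      ∑ u ∈ Icc 1 N with IsHeapAncestor v u, td u v +
        #{u ∈ Icc 1 N | IsHeapAncestor v u} := by
    rw [card_eq_sum_ones, ← sum_add_distrib]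
    exact sum_congr rfl fun u hu =>
      td_div_two_right_of_isHeapAncestor hv (mem_filter.1 hu).2
  have hout : ∑ u ∈ Icc 1 N with ¬ IsHeapAncestor v u, td u v =
      ∑ u ∈ Icc 1 N with ¬ IsHeapAncestor v u, td u (v / 2) +
        #{u ∈ Icc 1 N | ¬ IsHeapAncestor v u} := by
    rw [card_eq_sum_ones, ← sum_add_distrib]
    refine sum_congr rfl fun u hu => ?_
    obtain ⟨hu, huv⟩ := mem_filter.1 hu
    exact td_div_two_right_of_not_isHeapAncestor (mem_Icc.1 hu).1 hv huv
  have hcard :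
      #{u ∈ Icc 1 N | IsHeapAncestor v u} + #{u ∈ Icc 1 N | ¬ IsHeapAncestor v u} = N := by
    rw [card_filter_add_card_filter_not, Nat.card_Icc, Nat.add_sub_cancel]
  rw [heapSC, heapSC, ← sum_filter_add_sum_filter_not _ (IsHeapAncestor v),
    ← sum_filter_add_sum_filter_not _ (IsHeapAncestor v) (fun u => td u v)]
  omega

open Classical in
/-- The descendants `k` levels below `v` form the interval `[v * 2 ^ k, (v + 1) * 2 ^ k)`, and as
`v ≥ 2` only the levels `k < h` fit into the tree of height `h`. -/
lemma card_isHeapAncestor_le {h v : ℕ} (hv : 2 ≤ v) :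
    #{u ∈ Icc 1 (2 ^ (h + 1) - 1) | IsHeapAncestor v u} ≤ 2 ^ h - 1 := by
  have hsub : {u ∈ Icc 1 (2 ^ (h + 1) - 1) | IsHeapAncestor v u} ⊆
      (range h).biUnion fun k => Ico (v * 2 ^ k) ((v + 1) * 2 ^ k) := by
    intro u hu
    obtain ⟨huN, k, rfl⟩ := mem_filter.1 hu
    have hpos : 0 < 2 ^ k := Nat.two_pow_pos k
    have hlow : u / 2 ^ k * 2 ^ k ≤ u := Nat.div_mul_le_self u _
    have hlt : k < h := by
      have : 2 ^ (k + 1) ≤ u := by rw [pow_succ']; nlinarith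
      have : 2 ^ (k + 1) < 2 ^ (h + 1) := by rw [mem_Icc] at huN; omega
      have := (Nat.pow_lt_pow_iff_right (by norm_num)).1 this
      omega
    simp only [mem_biUnion, mem_range, mem_Ico]
    exact ⟨k, hlt, hlow, Nat.lt_mul_of_div_lt (Nat.lt_succ_self _) hpos⟩
  calc _ ≤ _ := card_le_card hsub
    _ ≤ ∑ k ∈ range h, (Ico (v * 2 ^ k) ((v + 1) * 2 ^ k)).card :=
      card_biUnion_le
    _ = ∑ k ∈ range h, 2 ^ k := by
      refine sum_congr rfl fun k _ => ?_
      rw [Nat.card_Ico, add_mul, one_mul, Nat.add_sub_cancel_left]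
    _ = 2 ^ h - 1 := by rw [Nat.geomSum_eq le_rfl]; simp

lemma heapSC_div_two_le {h v : ℕ} (hv : 2 ≤ v) :
    heapSC (2 ^ (h + 1) - 1) (v / 2) ≤ heapSC (2 ^ (h + 1) - 1) v := by
  have hsplit := heapSC_div_two_add_card (N := 2 ^ (h + 1) - 1) hv
  have hanc := card_isHeapAncestor_le (h := h) hv
  have : 2 * 2 ^ h = 2 ^ (h + 1) := by ring
  omega

lemma heapSC_one_le {h v : ℕ} (hv : 1 ≤ v) :
    heapSC (2 ^ (h + 1) - 1) 1 ≤ heapSC (2 ^ (h + 1) - 1) v := by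
  induction v using Nat.strong_induction_on with
  | _ v ih =>
    rcases hv.eq_or_lt with rfl | hv
    · rfl
    · exact (ih (v / 2) (by omega) (by omega)).trans (heapSC_div_two_le hv)

lemma mul_two_pow_le_heapSC_one (h : ℕ) : h * 2 ^ h ≤ heapSC (2 ^ (h + 1) - 1) 1 := by
  have hleaves : Ico (2 ^ h) (2 ^ (h + 1)) ⊆ Icc 1 (2 ^ (h + 1) - 1) := by
    intro u hu
    have : 1 ≤ 2 ^ h := Nat.one_le_two_pow
    simp only [mem_Ico, mem_Icc] at hu ⊢
    omega
  have hdepth : ∀ u ∈ Ico (2 ^ h) (2 ^ (h + 1)), td u 1 = h := by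
    intro u hu
    rw [mem_Ico] at hu
    rw [td_one_right (Nat.one_le_two_pow.trans hu.1), Nat.log_eq_of_pow_le_of_lt_pow hu.1 hu.2]
  calc h * 2 ^ h = ∑ u ∈ Ico (2 ^ h) (2 ^ (h + 1)), td u 1 := by
        rw [sum_congr rfl hdepth, sum_const, Nat.card_Ico, smul_eq_mul, pow_succ, mul_two,
          Nat.add_sub_cancel, mul_comm]
    _ ≤ heapSC (2 ^ (h + 1) - 1) 1 := sum_le_sum_of_subset hleaves

lemma heapSC_le_three_mul_heapSC_one {h v : ℕ} (hv : 1 ≤ v) (hvN : v ≤ 2 ^ (h + 1) - 1) :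
    heapSC (2 ^ (h + 1) - 1) v ≤ 3 * heapSC (2 ^ (h + 1) - 1) 1 := by
  have hdepth : Nat.log 2 v ≤ h := by
    have : 1 ≤ 2 ^ (h + 1) := Nat.one_le_two_pow
    exact Nat.lt_succ_iff.1 (Nat.log_lt_of_lt_pow (by omega) (by omega))
  have hleaves := mul_two_pow_le_heapSC_one h
  calc heapSC (2 ^ (h + 1) - 1) v
      ≤ heapSC (2 ^ (h + 1) - 1) 1 + (2 ^ (h + 1) - 1) * Nat.log 2 v :=
        heapSC_le_heapSC_one_add hv
    _ ≤ heapSC (2 ^ (h + 1) - 1) 1 + 2 * (h * 2 ^ h) := by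
      have : (2 ^ (h + 1) - 1) * Nat.log 2 v ≤ 2 * (h * 2 ^ h) :=
        (Nat.mul_le_mul (by omega : 2 ^ (h + 1) - 1 ≤ 2 ^ (h + 1)) hdepth).trans_eq (by ring)
      omega
    _ ≤ 3 * heapSC (2 ^ (h + 1) - 1) 1 := by omega

lemma pbtSC_root_le (h : ℕ) (v : Fin (2 ^ (h + 1) - 1)) : pbtSC h (pbtRoot h) ≤ pbtSC h v := by
  rw [pbtSC_root, pbtSC_eq_heapSC]
  exact heapSC_one_le (by omega)

lemma pbtSC_le_three_mul_root (h : ℕ) (w : Fin (2 ^ (h + 1) - 1)) :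
    pbtSC h w ≤ 3 * pbtSC h (pbtRoot h) := by
  rw [pbtSC_root, pbtSC_eq_heapSC]
  exact heapSC_le_three_mul_heapSC_one (by omega) (by omega)

theorem pbt_distortion_at_most_three_general (h : ℕ) :
    (∀ ℓ : Fin (2 ^ (h + 1) - 1), 2 ^ h ≤ (ℓ : ℕ) + 1 →
      pbtSC h ℓ ≤ 3 * pbtSC h (pbtRoot h)) ∧
    (∀ v w : Fin (2 ^ (h + 1) - 1), pbtSC h w ≤ 3 * pbtSC h v) :=
  ⟨fun ℓ _ => pbtSC_le_three_mul_root h ℓ,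
    fun v w => (pbtSC_le_three_mul_root h w).trans (Nat.mul_le_mul_left 3 (pbtSC_root_le h v))⟩

/-- **Distortion upper bound 3 on perfect binary trees.**  In the perfect binary tree
of height `h ≥ 1`, every leaf `ℓ` satisfies `S(ℓ) ≤ 3·S(root)`; combined with the fact
that the root minimizes and leaves maximize `S`, every pair of vertices `v, w` satisfies
`S(w) ≤ 3·S(v)`, so the distortion of any voting rule (in particular IRV) on unweighted
perfect binary trees is at most `3`. -/
theorem pbt_distortion_at_most_three (h : ℕ) (hh : 1 ≤ h) :
    (∀ ℓ : Fin (2 ^ (h + 1) - 1), 2 ^ h ≤ (ℓ : ℕ) + 1 →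
      pbtSC h ℓ ≤ 3 * pbtSC h (pbtRoot h)) ∧
    (∀ v w : Fin (2 ^ (h + 1) - 1), pbtSC h w ≤ 3 * pbtSC h v) :=
  pbt_distortion_at_most_three_general h
end
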